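/- Sufficient condition via cumulative subspace coherence for P'_{ℓq/ℓ1} (Proposition 4): if ζ_k + ζ_{k−1} < (1−ε'_q)/(1+ε'_q), then for every k-subset Λ_k and every nonzero x ∈ (⊕_{i∈Λ_k}S_i) ∩ (⊕_{i∉Λ_k}S_i), the minimum of Σ_{i∈Λ_k}‖B[i]c[i]‖_q over representations of x using blocks in Λ_k is strictly less than the minimum of Σ_{i∉Λ_k}‖B[i]c[i]‖_q over representations using blocks outside Λ_k. -/

import Mathlib

open scoped BigOperators

/-- The subspace coherence of two subspaces of `R^D`. -/
noncomputable def subCoh {D : ℕ} (S T : Submodule ℝ (EuclideanSpace ℝ (Fin D))) : ℝ :=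
  sSup {r : ℝ | ∃ x ∈ S, ∃ z ∈ T, x ≠ 0 ∧ z ≠ 0 ∧ r = |(inner ℝ x z : ℝ)| / (‖x‖ * ‖z‖)}

/-- The `k`-cumulative subspace coherence `ζ_k` of a collection of subspaces. -/
noncomputable def zeta {D n : ℕ} (S : Fin n → Submodule ℝ (EuclideanSpace ℝ (Fin D)))
    (k : ℕ) : ℝ :=
  sSup {r : ℝ | ∃ (Λ : Finset (Fin n)) (i : Fin n),
    Λ.card = k ∧ i ∉ Λ ∧ r = ∑ j ∈ Λ, subCoh (S i) (S j)}

/-- The mutual subspace coherence `μ_S` of a collection of subspaces. -/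
noncomputable def muS {D n : ℕ} (S : Fin n → Submodule ℝ (EuclideanSpace ℝ (Fin D))) : ℝ :=
  sSup {r : ℝ | ∃ i j : Fin n, i ≠ j ∧ r = subCoh (S i) (S j)}

/-- The `ℓ_q` norm of a finite vector: `(∑ |v i|^q)^{1/q}`. -/
noncomputable def lqnorm (q : ℝ) {ι : Type*} [Fintype ι] (v : ι → ℝ) : ℝ :=
  (∑ i, |v i| ^ q) ^ (1 / q)

/-- The `ℓ_q` norm of a vector of `R^D` (viewed as a Euclidean space element). -/
noncomputable def lqnormE (q : ℝ) {D : ℕ} (v : EuclideanSpace ℝ (Fin D)) : ℝ :=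
  lqnorm q ((WithLp.equiv 2 (Fin D → ℝ)) v)

/-!
Write `x = ∑_{i ∈ Λ} a_i = ∑_{j ∉ Λ} b_j` with `a_i, b_j` in the blocks. Pairing `a_i` with `x`
gives `‖a_i‖² = ∑_j ⟪a_i, b_j⟫ - ∑_{i' ≠ i} ⟪a_i, a_{i'}⟫`; bounding every inner product by the
coherence of the two blocks and summing over `i ∈ Λ` yields
`(1 - ζ_{k-1}) ∑ ‖a_i‖ ≤ ζ_k ∑ ‖b_j‖`. Comparing `‖·‖₂` with `‖·‖_q` block by block turns this into
`(1 - ζ_{k-1}) √(1-ε') ∑ ‖a_i‖_q ≤ ζ_k √(1+ε') ∑ ‖b_j‖_q`, and the hypothesis on `ζ_k + ζ_{k-1}`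
makes the constant on the right the smaller one. Since moreover `∑ ‖b_j‖_q ≥ ‖x‖ / √(1+ε') > 0`
for every representation outside `Λ`, the two infima are separated by a positive gap.
-/

open Finset

section Coherence

variable {D n : ℕ} (S : Fin n → Submodule ℝ (EuclideanSpace ℝ (Fin D)))

theorem subCoh_nonneg (T U : Submodule ℝ (EuclideanSpace ℝ (Fin D))) : 0 ≤ subCoh T U :=
  Real.sSup_nonneg fun _ ⟨_, _, _, _, _, _, hr⟩ => hr ▸ by positivity

theorem subCoh_comm (T U : Submodule ℝ (EuclideanSpace ℝ (Fin D))) :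
    subCoh T U = subCoh U T := by
  unfold subCoh
  congr 1
  ext r
  constructor <;> rintro ⟨x, hx, z, hz, hx0, hz0, rfl⟩ <;>
    exact ⟨z, hz, x, hx, hz0, hx0, by rw [real_inner_comm, mul_comm]⟩

theorem abs_inner_le_subCoh_mul {T U : Submodule ℝ (EuclideanSpace ℝ (Fin D))}
    {u v : EuclideanSpace ℝ (Fin D)} (hu : u ∈ T) (hv : v ∈ U) :
    |(inner ℝ u v : ℝ)| ≤ subCoh T U * (‖u‖ * ‖v‖) := by
  rcases eq_or_ne u 0 with rfl | hu0
  · simp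
  rcases eq_or_ne v 0 with rfl | hv0
  · simp
  have hbdd : BddAbove {r : ℝ | ∃ x ∈ T, ∃ z ∈ U, x ≠ 0 ∧ z ≠ 0 ∧
      r = |(inner ℝ x z : ℝ)| / (‖x‖ * ‖z‖)} := by
    refine ⟨1, ?_⟩
    rintro r ⟨x, -, z, -, hx0, hz0, rfl⟩
    rw [div_le_one (by positivity)]
    exact abs_real_inner_le_norm x z
  rw [← div_le_iff₀ (by positivity)]
  exact le_csSup hbdd ⟨u, hu, v, hv, hu0, hv0, rfl⟩

theorem sum_subCoh_le_zeta {Λ : Finset (Fin n)} {i : Fin n} (hi : i ∉ Λ) :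
    ∑ j ∈ Λ, subCoh (S i) (S j) ≤ zeta S Λ.card := by
  refine le_csSup ?_ ⟨Λ, i, rfl, hi, rfl⟩
  refine ((Set.finite_range fun p : Finset (Fin n) × Fin n =>
    ∑ j ∈ p.1, subCoh (S p.2) (S j)).subset ?_).bddAbove
  rintro r ⟨Λ', i', -, -, rfl⟩
  exact ⟨(Λ', i'), rfl⟩

theorem zeta_nonneg (k : ℕ) : 0 ≤ zeta S k :=
  Real.sSup_nonneg fun _ ⟨_, _, _, _, hr⟩ =>
    hr ▸ sum_nonneg fun _ _ => subCoh_nonneg _ _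

theorem sum_mul_sum_subCoh_le_zeta_mul {U : Finset (Fin n)} {T : Fin n → Finset (Fin n)}
    {k : ℕ} (hT : ∀ j ∈ U, j ∉ T j ∧ (T j).card = k) {w : Fin n → ℝ}
    (hw : ∀ j ∈ U, 0 ≤ w j) :
    ∑ j ∈ U, (∑ i ∈ T j, subCoh (S i) (S j)) * w j ≤ zeta S k * ∑ j ∈ U, w j := by
  rw [mul_sum]
  refine sum_le_sum fun j hj => mul_le_mul_of_nonneg_right ?_ (hw j hj)
  obtain ⟨hjT, hcard⟩ := hT j hj
  simp_rw [subCoh_comm (S _) (S j)]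
  exact hcard ▸ sum_subCoh_le_zeta S hjT

variable {S} {a b : Fin n → EuclideanSpace ℝ (Fin D)} {Λ : Finset (Fin n)}

theorem norm_le_sum_subCoh_mul_norm (ha : ∀ i, a i ∈ S i) (hb : ∀ j, b j ∈ S j)
    (hab : ∑ i ∈ Λ, a i = ∑ j ∈ Λᶜ, b j) {i : Fin n} (hi : i ∈ Λ) :
    ‖a i‖ ≤ ∑ j ∈ Λᶜ, subCoh (S i) (S j) * ‖b j‖ +
      ∑ i' ∈ Λ.erase i, subCoh (S i) (S i') * ‖a i'‖ := by
  have hpair : ‖a i‖ ^ 2 = ∑ j ∈ Λᶜ, (inner ℝ (a i) (b j) : ℝ) -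
      ∑ i' ∈ Λ.erase i, (inner ℝ (a i) (a i') : ℝ) := by
    rw [← inner_sum, ← hab, inner_sum, ← add_sum_erase _ _ hi, real_inner_self_eq_norm_sq]
    ring
  have hb' : ∑ j ∈ Λᶜ, (inner ℝ (a i) (b j) : ℝ) ≤
      ‖a i‖ * ∑ j ∈ Λᶜ, subCoh (S i) (S j) * ‖b j‖ := by
    rw [mul_sum]
    refine sum_le_sum fun j _ => (le_abs_self _).trans ?_
    linarith [abs_inner_le_subCoh_mul (ha i) (hb j)]
  have ha' : -∑ i' ∈ Λ.erase i, (inner ℝ (a i) (a i') : ℝ) ≤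
      ‖a i‖ * ∑ i' ∈ Λ.erase i, subCoh (S i) (S i') * ‖a i'‖ := by
    rw [mul_sum, ← sum_neg_distrib]
    refine sum_le_sum fun i' _ => (neg_le_abs _).trans ?_
    linarith [abs_inner_le_subCoh_mul (ha i) (ha i')]
  have hnonneg : 0 ≤ ∑ j ∈ Λᶜ, subCoh (S i) (S j) * ‖b j‖ +
      ∑ i' ∈ Λ.erase i, subCoh (S i) (S i') * ‖a i'‖ :=
    add_nonneg (sum_nonneg fun _ _ => mul_nonneg (subCoh_nonneg _ _) (norm_nonneg _))
      (sum_nonneg fun _ _ => mul_nonneg (subCoh_nonneg _ _) (norm_nonneg _))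
  nlinarith [norm_nonneg (a i)]

theorem one_sub_zeta_mul_sum_norm_le (ha : ∀ i, a i ∈ S i) (hb : ∀ j, b j ∈ S j)
    (hab : ∑ i ∈ Λ, a i = ∑ j ∈ Λᶜ, b j) :
    (1 - zeta S (Λ.card - 1)) * ∑ i ∈ Λ, ‖a i‖ ≤ zeta S Λ.card * ∑ j ∈ Λᶜ, ‖b j‖ := by
  have hsum := sum_le_sum fun i hi => norm_le_sum_subCoh_mul_norm ha hb hab hi
  rw [sum_add_distrib] at hsum
  have hcross : ∑ i ∈ Λ, ∑ j ∈ Λᶜ, subCoh (S i) (S j) * ‖b j‖ ≤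
      zeta S Λ.card * ∑ j ∈ Λᶜ, ‖b j‖ := by
    rw [sum_comm]
    simp_rw [← sum_mul]
    exact sum_mul_sum_subCoh_le_zeta_mul S (fun j hj => ⟨mem_compl.mp hj, rfl⟩)
      fun _ _ => norm_nonneg _
  have hwithin : ∑ i ∈ Λ, ∑ i' ∈ Λ.erase i, subCoh (S i) (S i') * ‖a i'‖ ≤
      zeta S (Λ.card - 1) * ∑ i ∈ Λ, ‖a i‖ := by
    rw [sum_comm' (t' := Λ) (s' := fun i' => Λ.erase i') fun i i' => by
      simp only [mem_erase]; tauto]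
    simp_rw [← sum_mul]
    exact sum_mul_sum_subCoh_le_zeta_mul S
      (fun i hi => ⟨notMem_erase i Λ, card_erase_of_mem hi⟩) fun _ _ => norm_nonneg _
  linarith

end Coherence

theorem sqrt_mul_le_of_mul_sq_le {a s t : ℝ} (ht : 0 ≤ t) (hs : 0 ≤ s)
    (h : a * t ^ 2 ≤ s ^ 2) : √a * t ≤ s := by
  calc √a * t = √(a * t ^ 2) := by rw [Real.sqrt_mul' a (sq_nonneg t), Real.sqrt_sq ht]
    _ ≤ √(s ^ 2) := Real.sqrt_le_sqrt h
    _ = s := Real.sqrt_sq hs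

theorem le_sqrt_mul_of_sq_le_mul_sq {a s t : ℝ} (ht : 0 ≤ t) (hs : 0 ≤ s)
    (h : s ^ 2 ≤ a * t ^ 2) : s ≤ √a * t := by
  calc s = √(s ^ 2) := (Real.sqrt_sq hs).symm
    _ ≤ √(a * t ^ 2) := Real.sqrt_le_sqrt h
    _ = √a * t := by rw [Real.sqrt_mul' a (sq_nonneg t), Real.sqrt_sq ht]

theorem mul_sqrt_one_add_lt_mul_sqrt_one_sub {ε z z' : ℝ} (hε0 : 0 ≤ ε) (hε1 : ε < 1)
    (hz : 0 ≤ z) (hz' : 0 ≤ z') (h : z + z' < (1 - ε) / (1 + ε)) :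
    z * √(1 + ε) < (1 - z') * √(1 - ε) := by
  have hsub : 0 < √(1 - ε) := Real.sqrt_pos.mpr (by linarith)
  have hsub_sq : √(1 - ε) ^ 2 = 1 - ε := Real.sq_sqrt (by linarith)
  have hadd_sq : √(1 + ε) ^ 2 = 1 + ε := Real.sq_sqrt (by linarith)
  have hle : √(1 - ε) ≤ √(1 + ε) := Real.sqrt_le_sqrt (by linarith)
  rw [lt_div_iff₀ (by linarith)] at h
  refine lt_of_mul_lt_mul_right ?_ hsub.le
  nlinarith [mul_le_mul_of_nonneg_left hle (mul_nonneg hz (Real.sqrt_nonneg (1 + ε))),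
    mul_nonneg hz' hε0]

theorem lqnormE_nonneg (q : ℝ) {D : ℕ} (v : EuclideanSpace ℝ (Fin D)) : 0 ≤ lqnormE q v := by
  unfold lqnormE lqnorm
  positivity

theorem csInf_lt_csInf_of_mul_le {s t : Set ℝ} (hs : BddBelow s) (ht : t.Nonempty)
    {v θ κ δ : ℝ} (hv : v ∈ s) (hθ : 0 ≤ θ) (hθκ : θ < κ) (hδ : 0 < δ)
    (h : ∀ w ∈ t, κ * v ≤ θ * w ∧ δ ≤ w) : sInf s < sInf t := by
  have hκ : 0 < κ := hθ.trans_lt hθκ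
  have hgap : ∀ w ∈ t, v + (κ - θ) * δ / κ ≤ w := fun w hw => by
    obtain ⟨hvw, hδw⟩ := h w hw
    rw [add_div' _ _ _ hκ.ne', div_le_iff₀ hκ]
    nlinarith
  calc sInf s ≤ v := csInf_le hs hv
    _ < v + (κ - θ) * δ / κ := lt_add_of_pos_right v (by have := sub_pos.mpr hθκ; positivity)
    _ ≤ sInf t := le_csInf ht hgap

section Blocks

variable {D n : ℕ} {m : Fin n → ℕ} {q ε' : ℝ}
  {S : Fin n → Submodule ℝ (EuclideanSpace ℝ (Fin D))}
  {B : ∀ i : Fin n, (Fin (m i) → ℝ) →ₗ[ℝ] EuclideanSpace ℝ (Fin D)}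

theorem exists_eq_sum_of_mem_iSup (hrange : ∀ i, LinearMap.range (B i) = S i)
    {T : Finset (Fin n)} {x : EuclideanSpace ℝ (Fin D)} (hx : x ∈ ⨆ i ∈ T, S i) :
    ∃ c : ∀ i : Fin n, Fin (m i) → ℝ, (∀ i ∉ T, c i = 0) ∧ x = ∑ i, B i (c i) := by
  classical
  obtain ⟨μ, hμ⟩ := (Submodule.mem_iSup_finset_iff_exists_sum S x).mp hx
  choose c hc using fun i => (hrange i).ge (μ i).2
  refine ⟨fun i => if i ∈ T then c i else 0, fun i hi => if_neg hi, ?_⟩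
  simp [apply_ite, sum_ite_mem, hc, hμ]

theorem sum_eq_sum_univ_of_forall_notMem {T : Finset (Fin n)} {c : ∀ i : Fin n, Fin (m i) → ℝ}
    (hc : ∀ i ∉ T, c i = 0) : ∑ i ∈ T, B i (c i) = ∑ i, B i (c i) :=
  sum_subset (subset_univ T) fun i _ hi => by rw [hc i hi, map_zero]

theorem sqrt_one_sub_mul_sum_lqnormE_le
    (hlow : ∀ i c, (1 - ε') * lqnormE q (B i c) ^ 2 ≤ ‖B i c‖ ^ 2)
    (T : Finset (Fin n)) (c : ∀ i : Fin n, Fin (m i) → ℝ) :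
    √(1 - ε') * ∑ i ∈ T, lqnormE q (B i (c i)) ≤ ∑ i ∈ T, ‖B i (c i)‖ := by
  rw [mul_sum]
  exact sum_le_sum fun i _ =>
    sqrt_mul_le_of_mul_sq_le (lqnormE_nonneg q _) (norm_nonneg _) (hlow i (c i))

theorem sum_norm_le_sqrt_one_add_mul_sum_lqnormE
    (hup : ∀ i c, ‖B i c‖ ^ 2 ≤ (1 + ε') * lqnormE q (B i c) ^ 2)
    (T : Finset (Fin n)) (c : ∀ i : Fin n, Fin (m i) → ℝ) :
    ∑ i ∈ T, ‖B i (c i)‖ ≤ √(1 + ε') * ∑ i ∈ T, lqnormE q (B i (c i)) := by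
  rw [mul_sum]
  exact sum_le_sum fun i _ =>
    le_sqrt_mul_of_sq_le_mul_sq (lqnormE_nonneg q _) (norm_nonneg _) (hup i (c i))

theorem mul_sum_lqnormE_le_of_sum_eq (hrange : ∀ i, LinearMap.range (B i) = S i)
    (hlow : ∀ i c, (1 - ε') * lqnormE q (B i c) ^ 2 ≤ ‖B i c‖ ^ 2)
    (hup : ∀ i c, ‖B i c‖ ^ 2 ≤ (1 + ε') * lqnormE q (B i c) ^ 2)
    {Λ : Finset (Fin n)} (hζ : zeta S (Λ.card - 1) ≤ 1) {c c' : ∀ i : Fin n, Fin (m i) → ℝ}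
    (hc : ∀ i ∉ Λ, c i = 0) (hc' : ∀ i ∈ Λ, c' i = 0)
    (hcc' : ∑ i, B i (c i) = ∑ i, B i (c' i)) :
    (1 - zeta S (Λ.card - 1)) * √(1 - ε') * ∑ i ∈ Λ, lqnormE q (B i (c i)) ≤
      zeta S Λ.card * √(1 + ε') * ∑ j ∈ Λᶜ, lqnormE q (B j (c' j)) := by
  have hmem : ∀ (c : ∀ i : Fin n, Fin (m i) → ℝ) i, B i (c i) ∈ S i :=
    fun c i => hrange i ▸ LinearMap.mem_range_self (B i) (c i)
  have hsum : ∑ i ∈ Λ, B i (c i) = ∑ j ∈ Λᶜ, B j (c' j) := by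
    rw [sum_eq_sum_univ_of_forall_notMem hc, hcc',
      sum_eq_sum_univ_of_forall_notMem fun i hi => hc' i (notMem_compl.mp hi)]
  rw [mul_assoc, mul_assoc]
  calc (1 - zeta S (Λ.card - 1)) * (√(1 - ε') * ∑ i ∈ Λ, lqnormE q (B i (c i)))
      ≤ (1 - zeta S (Λ.card - 1)) * ∑ i ∈ Λ, ‖B i (c i)‖ :=
        mul_le_mul_of_nonneg_left (sqrt_one_sub_mul_sum_lqnormE_le hlow Λ c) (by linarith)
    _ ≤ zeta S Λ.card * ∑ j ∈ Λᶜ, ‖B j (c' j)‖ :=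
        one_sub_zeta_mul_sum_norm_le (hmem c) (hmem c') hsum
    _ ≤ zeta S Λ.card * (√(1 + ε') * ∑ j ∈ Λᶜ, lqnormE q (B j (c' j))) :=
        mul_le_mul_of_nonneg_left (sum_norm_le_sqrt_one_add_mul_sum_lqnormE hup Λᶜ c')
          (zeta_nonneg S _)

end Blocks

theorem prop4_cumulative_coherence_condition_general {D n k : ℕ} (q : ℝ)
    (m : Fin n → ℕ)
    (S : Fin n → Submodule ℝ (EuclideanSpace ℝ (Fin D)))
    (B : ∀ i : Fin n, (Fin (m i) → ℝ) →ₗ[ℝ] EuclideanSpace ℝ (Fin D))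
    (hrange : ∀ i, LinearMap.range (B i) = S i)
    (ε' : ℝ) (hε0 : 0 ≤ ε') (hε1 : ε' < 1)
    (hEps : ∀ (i : Fin n) (c : Fin (m i) → ℝ),
      (1 - ε') * (lqnormE q (B i c)) ^ 2 ≤ ‖B i c‖ ^ 2 ∧
      ‖B i c‖ ^ 2 ≤ (1 + ε') * (lqnormE q (B i c)) ^ 2)
    (hcond : zeta S k + zeta S (k - 1) < (1 - ε') / (1 + ε')) :
    ∀ (Λ : Finset (Fin n)) (x : EuclideanSpace ℝ (Fin D)),
      Λ.card = k → x ≠ 0 → x ∈ (⨆ i ∈ Λ, S i) → x ∈ (⨆ i ∈ Λᶜ, S i) →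
      sInf {r : ℝ | ∃ c : ∀ i : Fin n, Fin (m i) → ℝ, (∀ i ∉ Λ, c i = 0) ∧
          x = ∑ i, B i (c i) ∧ r = ∑ i ∈ Λ, lqnormE q (B i (c i))} <
      sInf {r : ℝ | ∃ c : ∀ i : Fin n, Fin (m i) → ℝ, (∀ i ∈ Λ, c i = 0) ∧
          x = ∑ i, B i (c i) ∧ r = ∑ i ∈ Λᶜ, lqnormE q (B i (c i))} := by
  intro Λ x hcard hx0 hxΛ hxΛc
  subst hcard
  have hlow := fun i c => (hEps i c).1
  have hup := fun i c => (hEps i c).2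
  have hζ : zeta S (Λ.card - 1) ≤ 1 := by
    have : (1 - ε') / (1 + ε') ≤ 1 := (div_le_one (by linarith)).mpr (by linarith)
    linarith [zeta_nonneg S Λ.card]
  have hsqrt : 0 < √(1 + ε') := Real.sqrt_pos.mpr (by linarith)
  obtain ⟨c, hc, hcx⟩ := exists_eq_sum_of_mem_iSup hrange hxΛ
  obtain ⟨c₀, hc₀, hc₀x⟩ := exists_eq_sum_of_mem_iSup hrange hxΛc
  refine csInf_lt_csInf_of_mul_le ⟨0, ?_⟩
    ⟨_, c₀, fun i hi => hc₀ i (notMem_compl.mpr hi), hc₀x, rfl⟩ ⟨c, hc, hcx, rfl⟩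
    (mul_nonneg (zeta_nonneg S _) (Real.sqrt_nonneg _))
    (mul_sqrt_one_add_lt_mul_sqrt_one_sub hε0 hε1 (zeta_nonneg S _) (zeta_nonneg S _) hcond)
    (div_pos (norm_pos_iff.mpr hx0) hsqrt) ?_
  · rintro _ ⟨-, -, -, rfl⟩
    exact sum_nonneg fun _ _ => lqnormE_nonneg q _
  · rintro _ ⟨c', hc', hc'x, rfl⟩
    refine ⟨mul_sum_lqnormE_le_of_sum_eq hrange hlow hup hζ hc hc' (hcx.symm.trans hc'x), ?_⟩
    rw [div_le_iff₀' hsqrt, hc'x,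
      ← sum_eq_sum_univ_of_forall_notMem fun i hi => hc' i (notMem_compl.mp hi)]
    exact (norm_sum_le _ _).trans (sum_norm_le_sqrt_one_add_mul_sum_lqnormE hup Λᶜ c')

/-- Proposition 4: if `ζ_k + ζ_{k−1} < (1−ε'_q)/(1+ε'_q)`, then the
exchange condition for `P'_{ℓq/ℓ1}` holds: for every `k`-subset `Λ` and every nonzero
`x ∈ (⊕_{i∈Λ}S_i) ∩ (⊕_{i∉Λ}S_i)`, the minimal value of `Σ_{i∈Λ}‖B[i]c[i]‖_q` over
representations of `x` on `Λ` is strictly smaller than the minimal value of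
`Σ_{i∉Λ}‖B[i]c[i]‖_q` over representations of `x` outside `Λ`. -/
theorem prop4_cumulative_coherence_condition {D n k : ℕ} (q : ℝ) (hq : 1 ≤ q)
    (m : Fin n → ℕ)
    (S : Fin n → Submodule ℝ (EuclideanSpace ℝ (Fin D)))
    (B : ∀ i : Fin n, (Fin (m i) → ℝ) →ₗ[ℝ] EuclideanSpace ℝ (Fin D))
    (hrange : ∀ i, LinearMap.range (B i) = S i)
    (hdisj : ∀ i j : Fin n, i ≠ j → S i ⊓ S j = ⊥)
    (ε' : ℝ) (hε0 : 0 ≤ ε') (hε1 : ε' < 1)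
    (hEps : ∀ (i : Fin n) (c : Fin (m i) → ℝ),
      (1 - ε') * (lqnormE q (B i c)) ^ 2 ≤ ‖B i c‖ ^ 2 ∧
      ‖B i c‖ ^ 2 ≤ (1 + ε') * (lqnormE q (B i c)) ^ 2)
    -- the uniqueness rank condition
    (hrank : ∀ s : Fin n → EuclideanSpace ℝ (Fin D),
      (∀ i, s i ∈ S i ∧ 1 - ε' ≤ ‖s i‖ ^ 2 ∧ ‖s i‖ ^ 2 ≤ 1 + ε') →
      2 * k ≤ (Matrix.of fun (a : Fin D) (i : Fin n) => s i a).rank)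
    (hcond : zeta S k + zeta S (k - 1) < (1 - ε') / (1 + ε')) :
    ∀ (Λ : Finset (Fin n)) (x : EuclideanSpace ℝ (Fin D)),
      Λ.card = k → x ≠ 0 → x ∈ (⨆ i ∈ Λ, S i) → x ∈ (⨆ i ∈ Λᶜ, S i) →
      sInf {r : ℝ | ∃ c : ∀ i : Fin n, Fin (m i) → ℝ, (∀ i ∉ Λ, c i = 0) ∧
          x = ∑ i, B i (c i) ∧ r = ∑ i ∈ Λ, lqnormE q (B i (c i))} <
      sInf {r : ℝ | ∃ c : ∀ i : Fin n, Fin (m i) → ℝ, (∀ i ∈ Λ, c i = 0) ∧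
          x = ∑ i, B i (c i) ∧ r = ∑ i ∈ Λᶜ, lqnormE q (B i (c i))} :=
  prop4_cumulative_coherence_condition_general q m S B hrange ε' hε0 hε1 hEps hcond
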